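/- For every joint probability distribution P on X_1 × X_2 with marginals P_1, P_2, set λ_1 = P(0,0), λ_2 = 1 − P_1(0) − P_2(0) + P(0,0), λ_3 = P_2(0) − P(0,0), and λ_4 = P_1(0) − P(0,0). Then λ_1, λ_2, λ_3, λ_4 ≥ 0, λ_1 + λ_2 + λ_3 + λ_4 = 1, and the rate pair (I_P(X_1;Y_2|X_2), I_P(X_2;Y_1|X_1)) is componentwise upper-bounded by λ_1·(0,0) + λ_2·(C_{1,1}, C_{2,1}) + λ_3·(C_{1,0}, 0) + λ_4·(0, C_{2,0}). In particular, every such rate pair is componentwise dominated by a point of the convex hull in ℝ² of the four points (0,0), (C_{1,1}, C_{2,1}), (C_{1,0}, 0), (0, C_{2,0}). -/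

import Mathlib

/-!
Fix the input `b` of the other user. Since `I(X₁;Y₂|X₂=b) = H(Y₂|b) - H(Y₂|X₁,b)` and
`H(Y₂|b) ≤ log s₂`, the conditional rate is at most `∑ₐ P(a|b) (log s₂ - H(W₂(·|a,b)))`.
The uniform row `a = 0` contributes nothing, and every other row is a permutation of row `1`
and contributes `C_{1,b}`; hence `I_P(X₁;Y₂|X₂) ≤ ∑_b (P₂(b) - P(0,b)) C_{1,b}`. By the
symmetry property all terms with `b ≠ 0` carry the same capacity `C_{1,1}`, and their total weight
is the mass `λ₂` of `{x₁ ≠ 0, x₂ ≠ 0}`, while the term `b = 0` has weight `λ₃`.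
The second user is handled by transposing.
-/

open Real BigOperators Finset

/-- Entropy of a finite probability vector, with the convention `0 * log 0 = 0`
(automatic since `Real.log 0 = 0`). -/
noncomputable def ent {n : ℕ} (p : Fin n → ℝ) : ℝ := -∑ y, p y * Real.log (p y)

/-- `Q` is a probability distribution on `Fin n`. -/
def IsProbDist {n : ℕ} (Q : Fin n → ℝ) : Prop := (∀ x, 0 ≤ Q x) ∧ ∑ x, Q x = 1

/-- `P` is a joint probability distribution. -/
def IsJointProbDist {m n : ℕ} (P : Fin m → Fin n → ℝ) : Prop :=
  (∀ x1 x2, 0 ≤ P x1 x2) ∧ ∑ x1, ∑ x2, P x1 x2 = 1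

/-- First marginal `P_1`. -/
noncomputable def marg1 {m n : ℕ} (P : Fin m → Fin n → ℝ) (x1 : Fin m) : ℝ := ∑ x2, P x1 x2

/-- Second marginal `P_2`. -/
noncomputable def marg2 {m n : ℕ} (P : Fin m → Fin n → ℝ) (x2 : Fin n) : ℝ := ∑ x1, P x1 x2

/-- Conditional mutual information `I_P(X₁;Y₂|X₂)`; terms with
`P x1 x2 * W2 x1 x2 y2 = 0` vanish, and summands with `marg2 P x2 = 0` vanish
since then `P x1 x2 = 0`. -/
noncomputable def condMI1 {m n t : ℕ} (P : Fin m → Fin n → ℝ)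
    (W2 : Fin m → Fin n → Fin t → ℝ) : ℝ :=
  ∑ x2, ∑ x1, ∑ y2, P x1 x2 * W2 x1 x2 y2 *
    Real.log (W2 x1 x2 y2 / ((∑ x1', P x1' x2 * W2 x1' x2 y2) / marg2 P x2))

/-- Conditional mutual information `I_P(X₂;Y₁|X₁)`. -/
noncomputable def condMI2 {m n t : ℕ} (P : Fin m → Fin n → ℝ)
    (W1 : Fin m → Fin n → Fin t → ℝ) : ℝ :=
  ∑ x1, ∑ x2, ∑ y1, P x1 x2 * W1 x1 x2 y1 *
    Real.log (W1 x1 x2 y1 / ((∑ x2', P x1 x2' * W1 x1 x2' y1) / marg1 P x1))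

/-- Structural assumptions of a generalized push-to-talk two-way channel with
input alphabets `Fin (r1+3)`, `Fin (r2+3)` and output alphabets `Fin (s1+2)`,
`Fin (s2+2)`: both marginal channels are transition matrices; the row of
input `0` of each user is uniform; for each state, the nonzero-input rows are
permutations of the row of input `1` and have constant column sums
(weak symmetry). -/
def GenPTT {r1 r2 s1 s2 : ℕ} (W1 : Fin (r1 + 3) → Fin (r2 + 3) → Fin (s1 + 2) → ℝ)
    (W2 : Fin (r1 + 3) → Fin (r2 + 3) → Fin (s2 + 2) → ℝ) : Prop :=
  (∀ x1 x2 y1, 0 ≤ W1 x1 x2 y1) ∧ (∀ x1 x2 y2, 0 ≤ W2 x1 x2 y2) ∧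
  (∀ x1 x2, ∑ y1, W1 x1 x2 y1 = 1) ∧ (∀ x1 x2, ∑ y2, W2 x1 x2 y2 = 1) ∧
  (∀ x2 y2, W2 0 x2 y2 = 1 / ((s2 : ℝ) + 2)) ∧
  (∀ x2, ∀ x1 : Fin (r1 + 3), x1 ≠ 0 →
    ∃ σ : Equiv.Perm (Fin (s2 + 2)), ∀ y2, W2 x1 x2 y2 = W2 1 x2 (σ y2)) ∧
  (∀ x2, ∀ y2 y2' : Fin (s2 + 2),
    ∑ x1 ∈ Finset.univ.filter (fun x1 => x1 ≠ (0 : Fin (r1 + 3))), W2 x1 x2 y2 =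
    ∑ x1 ∈ Finset.univ.filter (fun x1 => x1 ≠ (0 : Fin (r1 + 3))), W2 x1 x2 y2') ∧
  (∀ x1 y1, W1 x1 0 y1 = 1 / ((s1 : ℝ) + 2)) ∧
  (∀ x1, ∀ x2 : Fin (r2 + 3), x2 ≠ 0 →
    ∃ σ : Equiv.Perm (Fin (s1 + 2)), ∀ y1, W1 x1 x2 y1 = W1 x1 1 (σ y1)) ∧
  (∀ x1, ∀ y1 y1' : Fin (s1 + 2),
    ∑ x2 ∈ Finset.univ.filter (fun x2 => x2 ≠ (0 : Fin (r2 + 3))), W1 x1 x2 y1 =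
    ∑ x2 ∈ Finset.univ.filter (fun x2 => x2 ≠ (0 : Fin (r2 + 3))), W1 x1 x2 y1')

/-- `C_{1,x₂} = log s₂ − H(row of input 1 of Q_{1,x₂})`. -/
noncomputable def C1 {r1 r2 s2 : ℕ} (W2 : Fin (r1 + 3) → Fin (r2 + 3) → Fin (s2 + 2) → ℝ)
    (x2 : Fin (r2 + 3)) : ℝ := Real.log ((s2 : ℝ) + 2) - ent (fun y2 => W2 1 x2 y2)

/-- `C_{2,x₁} = log s₁ − H(row of input 1 of Q_{2,x₁})`. -/
noncomputable def C2 {r1 r2 s1 : ℕ} (W1 : Fin (r1 + 3) → Fin (r2 + 3) → Fin (s1 + 2) → ℝ)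
    (x1 : Fin (r1 + 3)) : ℝ := Real.log ((s1 : ℝ) + 2) - ent (fun y1 => W1 x1 1 y1)

/-- The channel symmetry property: `C_{1,x₂} = C_{1,1}` for all `x₂ ≠ 0` and
`C_{2,x₁} = C_{2,1}` for all `x₁ ≠ 0`. -/
def SymProp {r1 r2 s1 s2 : ℕ} (W1 : Fin (r1 + 3) → Fin (r2 + 3) → Fin (s1 + 2) → ℝ)
    (W2 : Fin (r1 + 3) → Fin (r2 + 3) → Fin (s2 + 2) → ℝ) : Prop :=
  (∀ x2 : Fin (r2 + 3), x2 ≠ 0 → C1 W2 x2 = C1 W2 1) ∧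
  (∀ x1 : Fin (r1 + 3), x1 ≠ 0 → C2 W1 x1 = C2 W1 1)

section Information

variable {α β : Type*} [Fintype α] [Fintype β]

lemma ent_eq_sum_negMulLog {n : ℕ} (p : Fin n → ℝ) : ent p = ∑ y, negMulLog (p y) := by
  simp [ent, negMulLog, Finset.sum_neg_distrib]

lemma sum_negMulLog_le_log_card {q : β → ℝ} (hq : ∀ y, 0 ≤ q y) (hsum : ∑ y, q y = 1) :
    ∑ y, negMulLog (q y) ≤ log (Fintype.card β) := by
  have hcard : (Fintype.card β : ℝ) ≠ 0 := by
    intro h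
    simp_all [Fintype.card_eq_zero_iff.mp (Nat.cast_eq_zero.mp h)]
  have hJensen := concaveOn_negMulLog.le_map_sum (t := Finset.univ)
    (w := fun _ => (Fintype.card β : ℝ)⁻¹) (p := q) (fun _ _ => by positivity)
    (by simp [hcard]) (fun y _ => Set.mem_Ici.mpr (hq y))
  simp only [smul_eq_mul, ← Finset.mul_sum, hsum, mul_one] at hJensen
  rw [negMulLog, Real.log_inv] at hJensen
  have := mul_le_mul_of_nonneg_left hJensen (Nat.cast_nonneg (Fintype.card β))
  field_simp at this
  linarith

lemma neg_mul_log_card_le_sum_mul_log_div {Q : β → ℝ} (hQ : ∀ y, 0 ≤ Q y) :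
    -(∑ y, Q y) * log (Fintype.card β) ≤ ∑ y, Q y * log (Q y / ∑ y', Q y') := by
  set S := ∑ y, Q y
  obtain hS | hS : S = 0 ∨ 0 < S := (Finset.sum_nonneg fun y _ => hQ y).eq_or_lt'
  · simp [hS]
  have hq := sum_negMulLog_le_log_card (q := fun y => Q y / S) (fun y => div_nonneg (hQ y) hS.le)
    (by rw [← Finset.sum_div, div_self hS.ne'])
  have hterm : ∀ y, Q y * log (Q y / S) = -S * negMulLog (Q y / S) := fun y => by
    rw [negMulLog]; field_simp
  simp only [hterm, ← Finset.mul_sum]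
  nlinarith

/-- For unnormalised input weights `p` and a channel `V`, this is `(∑ p) · I(X;Y)` with
`X ∼ p / ∑ p`. -/
noncomputable def mutualInfo (p : α → ℝ) (V : α → β → ℝ) : ℝ :=
  ∑ a, ∑ y, p a * V a y * log (V a y / ((∑ a', p a' * V a' y) / ∑ a', p a'))

lemma mutualInfo_le_sum_mul_sub_entropy {p : α → ℝ} {V : α → β → ℝ} (hp : ∀ a, 0 ≤ p a)
    (hV : ∀ a y, 0 ≤ V a y) (hV1 : ∀ a, ∑ y, V a y = 1) :
    mutualInfo p V ≤ ∑ a, p a * (log (Fintype.card β) - ∑ y, negMulLog (V a y)) := by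
  set Q : β → ℝ := fun y => ∑ a, p a * V a y
  have hQ : ∀ y, 0 ≤ Q y := fun y => Finset.sum_nonneg fun a _ => mul_nonneg (hp a) (hV a y)
  have hQsum : ∑ y, Q y = ∑ a, p a := by
    simp only [Q]
    rw [Finset.sum_comm]
    simp only [← Finset.mul_sum, hV1, mul_one]
  have hsplit : ∀ a y, p a * V a y * log (V a y / (Q y / ∑ a', p a')) =
      -(p a * negMulLog (V a y)) - p a * V a y * log (Q y / ∑ a', p a') := fun a y => by
    rcases (mul_nonneg (hp a) (hV a y)).eq_or_lt' with h0 | hpos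
    · rw [negMulLog, ← mul_assoc]
      simp [h0]
    have hpa := pos_of_mul_pos_left hpos (hV a y)
    have hQy : 0 < Q y := hpos.trans_le
      (Finset.single_le_sum (fun a' _ => mul_nonneg (hp a') (hV a' y)) (Finset.mem_univ a))
    have hS : 0 < ∑ a', p a' := hpa.trans_le
      (Finset.single_le_sum (fun a' _ => hp a') (Finset.mem_univ a))
    rw [Real.log_div (pos_of_mul_pos_right hpos (hp a)).ne' (div_pos hQy hS).ne', negMulLog]
    ring
  have hcross : ∑ a, ∑ y, p a * V a y * log (Q y / ∑ a', p a') =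
      ∑ y, Q y * log (Q y / ∑ y', Q y') := by
    rw [Finset.sum_comm, hQsum]
    simp only [Q, Finset.sum_mul]
  have hgibbs := neg_mul_log_card_le_sum_mul_log_div hQ
  rw [hQsum] at hgibbs
  calc mutualInfo p V
      = ∑ a, ∑ y, (-(p a * negMulLog (V a y)) - p a * V a y * log (Q y / ∑ a', p a')) :=
        Finset.sum_congr rfl fun a _ => Finset.sum_congr rfl fun y _ => hsplit a y
    _ = -∑ a, p a * ∑ y, negMulLog (V a y) - ∑ y, Q y * log (Q y / ∑ a, p a) := by
        simp only [Finset.sum_sub_distrib, Finset.sum_neg_distrib, Finset.mul_sum, hcross, hQsum]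
    _ ≤ ∑ a, p a * (log (Fintype.card β) - ∑ y, negMulLog (V a y)) := by
        simp only [mul_sub, Finset.sum_sub_distrib, ← Finset.sum_mul]
        linarith

lemma sum_negMulLog_uniform : ∑ _y : β, negMulLog (1 / (Fintype.card β : ℝ)) =
    log (Fintype.card β) := by
  rcases (Nat.cast_nonneg (Fintype.card β) : (0 : ℝ) ≤ _).eq_or_lt' with h | h
  · simp [h]
  simp only [Finset.sum_const, Finset.card_univ, nsmul_eq_mul, negMulLog, one_div, Real.log_inv]
  field_simp

lemma mutualInfo_le_of_uniform {p : α → ℝ} {V : α → β → ℝ} (hp : ∀ a, 0 ≤ p a)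
    (hV : ∀ a y, 0 ≤ V a y) (hV1 : ∀ a, ∑ y, V a y = 1) {a₀ : α}
    (hunif : ∀ y, V a₀ y = 1 / Fintype.card β) {h : ℝ}
    (hent : ∀ a ≠ a₀, ∑ y, negMulLog (V a y) = h) :
    mutualInfo p V ≤ (∑ a, p a - p a₀) * (log (Fintype.card β) - h) := by
  classical
  refine (mutualInfo_le_sum_mul_sub_entropy hp hV hV1).trans_eq ?_
  have hrest : ∀ a ∈ Finset.univ.erase a₀,
      p a * (log (Fintype.card β) - ∑ y, negMulLog (V a y)) = p a * (log (Fintype.card β) - h) :=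
    fun a ha => by rw [hent a (Finset.ne_of_mem_erase ha)]
  rw [← Finset.add_sum_erase _ _ (Finset.mem_univ a₀), Finset.sum_congr rfl hrest,
    ← Finset.sum_mul, ← Finset.sum_erase_eq_sub (Finset.mem_univ a₀)]
  simp only [hunif, sum_negMulLog_uniform, sub_self, mul_zero, zero_add]

end Information

section Marginals

variable {m n : ℕ} {P : Fin m → Fin n → ℝ}

lemma marg1_sub_nonneg (hP : ∀ a b, 0 ≤ P a b) (a : Fin m) (b : Fin n) :
    0 ≤ marg1 P a - P a b :=
  sub_nonneg.2 (Finset.single_le_sum (fun b' _ => hP a b') (Finset.mem_univ b))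

lemma marg2_sub_nonneg (hP : ∀ a b, 0 ≤ P a b) (a : Fin m) (b : Fin n) :
    0 ≤ marg2 P b - P a b :=
  sub_nonneg.2 (Finset.single_le_sum (fun a' _ => hP a' b) (Finset.mem_univ a))

variable [NeZero m] [NeZero n]

lemma sum_erase_zero_marg2_sub (hP : ∑ a, ∑ b, P a b = 1) :
    ∑ b ∈ Finset.univ.erase 0, (marg2 P b - P 0 b) = 1 - marg1 P 0 - marg2 P 0 + P 0 0 := by
  have hmarg : ∑ b, marg2 P b = 1 := by rw [← hP, Finset.sum_comm]; rfl
  rw [Finset.sum_sub_distrib, Finset.sum_erase_eq_sub (Finset.mem_univ 0),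
    Finset.sum_erase_eq_sub (Finset.mem_univ 0), hmarg, marg1]
  ring

lemma sum_marg2_sub_mul_eq (hP : ∑ a, ∑ b, P a b = 1) {c : Fin n → ℝ} {k : ℝ}
    (hc : ∀ b ≠ 0, c b = k) :
    ∑ b, (marg2 P b - P 0 b) * c b =
      (1 - marg1 P 0 - marg2 P 0 + P 0 0) * k + (marg2 P 0 - P 0 0) * c 0 := by
  rw [← Finset.add_sum_erase _ _ (Finset.mem_univ 0),
    Finset.sum_congr rfl fun b hb => by rw [hc b (Finset.ne_of_mem_erase hb)],
    ← Finset.sum_mul, sum_erase_zero_marg2_sub hP]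
  ring

lemma sum_marg1_sub_mul_eq (hP : ∑ a, ∑ b, P a b = 1) {c : Fin m → ℝ} {k : ℝ}
    (hc : ∀ a ≠ 0, c a = k) :
    ∑ a, (marg1 P a - P a 0) * c a =
      (1 - marg1 P 0 - marg2 P 0 + P 0 0) * k + (marg1 P 0 - P 0 0) * c 0 := by
  have := sum_marg2_sub_mul_eq (P := fun b a => P a b) (by rwa [Finset.sum_comm]) hc
  simp only [marg1, marg2] at this ⊢
  linarith

end Marginals

lemma condMI1_le {m n t : ℕ} [NeZero m] {P : Fin m → Fin n → ℝ} {W : Fin m → Fin n → Fin t → ℝ}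
    (hP : ∀ a b, 0 ≤ P a b) (hW : ∀ a b y, 0 ≤ W a b y) (hW1 : ∀ a b, ∑ y, W a b y = 1)
    (hunif : ∀ b y, W 0 b y = 1 / t)
    (hperm : ∀ b, ∀ a ≠ 0, ∃ σ : Equiv.Perm (Fin t), ∀ y, W a b y = W 1 b (σ y)) :
    condMI1 P W ≤ ∑ b, (marg2 P b - P 0 b) * (log t - ent (fun y => W 1 b y)) := by
  refine Finset.sum_le_sum fun b _ => ?_
  have hent : ∀ a ≠ 0, ∑ y, negMulLog (W a b y) = ent (fun y => W 1 b y) := fun a ha => by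
    obtain ⟨σ, hσ⟩ := hperm b a ha
    simp only [hσ, ent_eq_sum_negMulLog]
    exact Equiv.sum_comp σ (fun y => negMulLog (W 1 b y))
  have := mutualInfo_le_of_uniform (p := fun a => P a b) (V := fun a => W a b)
    (fun a => hP a b) (fun a => hW a b) (fun a => hW1 a b) (by simpa using hunif b) hent
  rwa [Fintype.card_fin] at this

lemma condMI2_le {m n t : ℕ} [NeZero n] {P : Fin m → Fin n → ℝ} {W : Fin m → Fin n → Fin t → ℝ}
    (hP : ∀ a b, 0 ≤ P a b) (hW : ∀ a b y, 0 ≤ W a b y) (hW1 : ∀ a b, ∑ y, W a b y = 1)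
    (hunif : ∀ a y, W a 0 y = 1 / t)
    (hperm : ∀ a, ∀ b ≠ 0, ∃ σ : Equiv.Perm (Fin t), ∀ y, W a b y = W a 1 (σ y)) :
    condMI2 P W ≤ ∑ a, (marg1 P a - P a 0) * (log t - ent (fun y => W a 1 y)) :=
  condMI1_le (P := fun b a => P a b) (W := fun b a => W a b) (fun b a => hP a b)
    (fun b a => hW a b) (fun b a => hW1 a b) hunif hperm

lemma add_add_add_smul_mem_convexHull {E : Type*} [AddCommGroup E] [Module ℝ E] (u v w z : E)
    {a b c d : ℝ} (ha : 0 ≤ a) (hb : 0 ≤ b) (hc : 0 ≤ c) (hd : 0 ≤ d) (habcd : a + b + c + d = 1) :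
    a • u + b • v + c • w + d • z ∈ convexHull ℝ {u, v, w, z} := by
  have := (convex_convexHull ℝ {u, v, w, z}).sum_mem (t := Finset.univ) (w := ![a, b, c, d])
    (z := ![u, v, w, z]) (fun i _ => by fin_cases i <;> assumption)
    (by simpa [Fin.sum_univ_four] using habcd)
    (fun i _ => subset_convexHull ℝ _ (by fin_cases i <;> simp))
  simpa [Fin.sum_univ_four, add_assoc] using this

/-- The rate pair of any joint input distribution is componentwise dominated by
the convex combination `λ₁(0,0) + λ₂(C₁₁,C₂₁) + λ₃(C₁₀,0) + λ₄(0,C₂₀)`, hence by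
a point of the convex hull of the four rate pairs. -/
theorem stmt11 (r1 r2 s1 s2 : ℕ)
    (W1 : Fin (r1 + 3) → Fin (r2 + 3) → Fin (s1 + 2) → ℝ)
    (W2 : Fin (r1 + 3) → Fin (r2 + 3) → Fin (s2 + 2) → ℝ)
    (hW : GenPTT W1 W2) (hSym : SymProp W1 W2)
    (P : Fin (r1 + 3) → Fin (r2 + 3) → ℝ) (hP : IsJointProbDist P) :
    0 ≤ P 0 0 ∧
    0 ≤ 1 - marg1 P 0 - marg2 P 0 + P 0 0 ∧
    0 ≤ marg2 P 0 - P 0 0 ∧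
    0 ≤ marg1 P 0 - P 0 0 ∧
    P 0 0 + (1 - marg1 P 0 - marg2 P 0 + P 0 0) + (marg2 P 0 - P 0 0) +
      (marg1 P 0 - P 0 0) = 1 ∧
    condMI1 P W2 ≤ (1 - marg1 P 0 - marg2 P 0 + P 0 0) * C1 W2 1 +
      (marg2 P 0 - P 0 0) * C1 W2 0 ∧
    condMI2 P W1 ≤ (1 - marg1 P 0 - marg2 P 0 + P 0 0) * C2 W1 1 +
      (marg1 P 0 - P 0 0) * C2 W1 0 ∧
    ∃ p ∈ convexHull ℝ ({((0 : ℝ), (0 : ℝ)), (C1 W2 1, C2 W1 1),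
        (C1 W2 0, (0 : ℝ)), ((0 : ℝ), C2 W1 0)} : Set (ℝ × ℝ)),
      condMI1 P W2 ≤ p.1 ∧ condMI2 P W1 ≤ p.2 := by
  obtain ⟨hPnn, hPsum⟩ := hP
  obtain ⟨hW1nn, hW2nn, hW1sum, hW2sum, hW2unif, hW2perm, -, hW1unif, hW1perm, -⟩ := hW
  have hl₂ : 0 ≤ 1 - marg1 P 0 - marg2 P 0 + P 0 0 := sum_erase_zero_marg2_sub hPsum ▸
    Finset.sum_nonneg fun b _ => marg2_sub_nonneg hPnn 0 b
  have hR₁ := (condMI1_le hPnn hW2nn hW2sum (by simpa using hW2unif) hW2perm).trans_eq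
    (by push_cast; exact sum_marg2_sub_mul_eq hPsum hSym.1)
  have hR₂ := (condMI2_le hPnn hW1nn hW1sum (by simpa using hW1unif) hW1perm).trans_eq
    (by push_cast; exact sum_marg1_sub_mul_eq hPsum hSym.2)
  refine ⟨hPnn 0 0, hl₂, marg2_sub_nonneg hPnn 0 0, marg1_sub_nonneg hPnn 0 0, by ring, hR₁, hR₂,
    _, add_add_add_smul_mem_convexHull _ _ _ _ (hPnn 0 0) hl₂ (marg2_sub_nonneg hPnn 0 0)
      (marg1_sub_nonneg hPnn 0 0) (by ring), ?_, ?_⟩ <;> simpa
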